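/- arXiv:1306.2197 — 8 statements merged into one kernel-verified Lean document; each statement's English description precedes it below -/
import Mathlib

section
/- For all integers n ≥ r ≥ s ≥ 0, the inclusion matrix M_s^r(K_n^r) of the complete r-uniform hypergraph on n vertices (rows indexed by r-subsets of [n], columns by s-subsets, with entry 1 iff the s-set is contained in the r-set) has rank over ℚ equal to min(C(n,r), C(n,s)). -/
/-!
Write `M = M_s^r(K_n^r)` and let `W_j` be the `j`-sets versus `s`-sets inclusion matrix. The Gram
entry `(MᴴM)_{S,T}` counts the `r`-sets containing `S ∪ T`, namely `C(n - |S ∪ T|, n - r)`, which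
is `Σ_j C(|S ∩ T|, j) C(n - 2s, n - r - j)` by Vandermonde, while `(W_jᴴW_j)_{S,T} = C(|S ∩ T|, j)`.
Hence `MᴴM = Σ_j C(n - 2s, n - r - j) W_jᴴW_j`. If `r + s ≤ n`, the summand `j = s` is a positive
multiple of `W_sᴴW_s = 1` and the others are positive semidefinite, so `MᴴM` is positive definite
and `M` has full column rank `C(n, s)`. If `r + s ≥ n`, complementation turns `Mᵀ` into
`M_{n-r}^{n-s}(K_n^{n-s})`, which is in the first case.
-/

/-- The higher inclusion matrix `M_s^r(G)` of the hypergraph on `Fin n` with edge set `E`: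
rows indexed by edges, columns by `s`-subsets of `Fin n`, entry `1` iff containment. -/
def inclusionMatrix (n s : ℕ) (E : Finset (Finset (Fin n))) :
    Matrix {e : Finset (Fin n) // e ∈ E} {S : Finset (Fin n) // S.card = s} ℚ :=
  fun e S => if (S : Finset (Fin n)) ⊆ (e : Finset (Fin n)) then 1 else 0

open Finset Matrix

section Subsets

variable {α : Type*} [Fintype α] [DecidableEq α]

lemma card_filter_subset_powersetCard_univ {r : ℕ} (A : Finset α) (hr : r ≤ Fintype.card α) :
    #{e ∈ powersetCard r univ | A ⊆ e}
      = (Fintype.card α - #A).choose (Fintype.card α - r) := by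
  by_cases hA : #A ≤ r
  · rw [card_filter_powersetCard_subset A univ r (subset_univ A) hA, card_univ]
    exact Nat.choose_symm_of_eq_add (by omega)
  · have hAn := card_le_univ A
    rw [Nat.choose_eq_zero_of_lt (by omega), card_eq_zero, filter_eq_empty_iff]
    exact fun e he hAe => hA ((mem_powersetCard.1 he).2 ▸ card_le_card hAe)

lemma card_compl_eq_sub_iff {k : ℕ} (hk : k ≤ Fintype.card α) (S : Finset α) :
    #Sᶜ = Fintype.card α - k ↔ #S = k := by
  have := card_le_univ S
  rw [card_compl]
  omega

variable (α) in
def subsetMatrix (j s : ℕ) : Matrix {J : Finset α // #J = j} {S : Finset α // #S = s} ℚ :=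
  fun J S => if J.1 ⊆ S.1 then 1 else 0

lemma subsetMatrix_gram_apply (j s : ℕ) (S T : {S : Finset α // #S = s}) :
    ((subsetMatrix α j s)ᴴ * subsetMatrix α j s) S T = (#(S.1 ∩ T.1)).choose j := by
  have hfilter :
      {J ∈ powersetCard j (univ : Finset α) | J ⊆ S.1 ∩ T.1} = powersetCard j (S.1 ∩ T.1) := by
    ext J; simp [mem_powersetCard, and_comm]
  simp only [mul_apply, conjTranspose_apply, subsetMatrix, star_trivial, boole_mul, ← ite_and,
    ← subset_inter_iff]
  rw [← Finset.sum_subtype (powersetCard j (univ : Finset α)) (fun _ => mem_powersetCard_univ)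
    (fun J => if J ⊆ S.1 ∩ T.1 then (1 : ℚ) else 0), sum_boole, hfilter, card_powersetCard]

lemma subsetMatrix_gram_self (s : ℕ) : (subsetMatrix α s s)ᴴ * subsetMatrix α s s = 1 := by
  ext S T
  rw [subsetMatrix_gram_apply, one_apply]
  split_ifs with h
  · simp [h, T.2]
  · have hlt : #(S.1 ∩ T.1) < #S.1 :=
      card_lt_card (ssubset_of_subset_of_ne inter_subset_left fun h' => h <|
        Subtype.ext (eq_of_subset_of_card_le (inter_eq_left.1 h') (by rw [S.2, T.2])))
    simp [Nat.choose_eq_zero_of_lt (S.2 ▸ hlt)]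

end Subsets

section CompleteHypergraph

variable {n r s : ℕ}

lemma inclusionMatrix_gram_apply (hr : r ≤ n) (S T : {S : Finset (Fin n) // #S = s}) :
    ((inclusionMatrix n s (powersetCard r univ))ᴴ *
      inclusionMatrix n s (powersetCard r univ)) S T = (n - #(S.1 ∪ T.1)).choose (n - r) := by
  simp only [mul_apply, conjTranspose_apply, inclusionMatrix, star_trivial, boole_mul, ← ite_and,
    ← union_subset_iff]
  rw [sum_coe_sort (powersetCard r univ) (fun e => if S.1 ∪ T.1 ⊆ e then (1 : ℚ) else 0),
    sum_boole, card_filter_subset_powersetCard_univ _ (by simpa using hr), Fintype.card_fin]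

lemma choose_sub_card_union_eq_sum (h : 2 * s ≤ n) {S T : Finset (Fin n)} (hS : #S = s)
    (hT : #T = s) (k : ℕ) :
    (n - #(S ∪ T)).choose k
      = ∑ j ∈ range (k + 1), (#(S ∩ T)).choose j * (n - 2 * s).choose (k - j) := by
  have hunion : n - #(S ∪ T) = #(S ∩ T) + (n - 2 * s) := by
    have := card_union_add_card_inter S T
    have := card_le_univ (S ∪ T)
    rw [Fintype.card_fin] at this
    omega
  rw [hunion, Nat.add_choose_eq, Nat.sum_antidiagonal_eq_sum_range_succ_mk]

lemma inclusionMatrix_gram_eq_sum (h : 2 * s ≤ n) (hr : r ≤ n) :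
    (inclusionMatrix n s (powersetCard r univ))ᴴ * inclusionMatrix n s (powersetCard r univ)
      = ∑ j ∈ range (n - r + 1), ((n - 2 * s).choose (n - r - j) : ℚ) •
          ((subsetMatrix (Fin n) j s)ᴴ * subsetMatrix (Fin n) j s) := by
  ext S T
  rw [inclusionMatrix_gram_apply hr, choose_sub_card_union_eq_sum h S.2 T.2, Matrix.sum_apply]
  push_cast
  refine sum_congr rfl fun j _ => ?_
  rw [Matrix.smul_apply, subsetMatrix_gram_apply, smul_eq_mul, mul_comm]

lemma posDef_inclusionMatrix_gram (hs : s ≤ r) (h : r + s ≤ n) :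
    ((inclusionMatrix n s (powersetCard r univ))ᴴ *
      inclusionMatrix n s (powersetCard r univ)).PosDef := by
  rw [inclusionMatrix_gram_eq_sum (by omega) (by omega),
    ← add_sum_erase _ _ (mem_range.2 (show s < n - r + 1 by omega)), subsetMatrix_gram_self]
  have hcoeff : (0 : ℚ) < (n - 2 * s).choose (n - r - s) := by
    exact_mod_cast Nat.choose_pos (by omega)
  exact (PosDef.one.smul hcoeff).add_posSemidef <| posSemidef_sum _ fun j _ =>
    (posSemidef_conjTranspose_mul_self _).smul (Nat.cast_nonneg _)

lemma rank_inclusionMatrix_of_add_le (hs : s ≤ r) (h : r + s ≤ n) :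
    (inclusionMatrix n s (powersetCard r univ)).rank = n.choose s := by
  rw [← rank_conjTranspose_mul_self, rank_of_isUnit _ (posDef_inclusionMatrix_gram hs h).isUnit,
    Fintype.card_finset_len, Fintype.card_fin]

lemma rank_inclusionMatrix_compl (hs : s ≤ n) (hr : r ≤ n) :
    (inclusionMatrix n s (powersetCard r univ)).rank
      = (inclusionMatrix n (n - r) (powersetCard (n - s) univ)).rank := by
  let σ : {S : Finset (Fin n) // #S = s} ≃ {S // S ∈ powersetCard (n - s) univ} :=
    (compl_involutive.toPerm _).subtypeEquiv fun S => by
      simp [← card_compl_eq_sub_iff (by simpa using hs) S]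
  let τ : {e : Finset (Fin n) // e ∈ powersetCard r univ} ≃ {e // #e = n - r} :=
    (compl_involutive.toPerm _).subtypeEquiv fun e => by
      simp [← card_compl_eq_sub_iff (by simpa using hr) e]
  rw [← rank_transpose, ← rank_submatrix _ σ τ]
  congr 1
  ext S e
  exact if_congr compl_subset_compl.symm rfl rfl

end CompleteHypergraph

theorem stmt0 (n r s : ℕ) (hs : s ≤ r) (hr : r ≤ n) :
    (inclusionMatrix n s ((Finset.univ : Finset (Fin n)).powersetCard r)).rank
      = min (n.choose r) (n.choose s) := by
  have hrow := rank_le_card_height (inclusionMatrix n s ((univ : Finset (Fin n)).powersetCard r))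
  have hcol := rank_le_card_width (inclusionMatrix n s ((univ : Finset (Fin n)).powersetCard r))
  simp only [Fintype.card_coe, card_powersetCard, card_univ, Fintype.card_finset_len,
    Fintype.card_fin] at hrow hcol
  rcases le_total (r + s) n with h | h
  · rw [rank_inclusionMatrix_of_add_le hs h] at hrow ⊢
    omega
  · rw [rank_inclusionMatrix_compl (hs.trans hr) hr,
      rank_inclusionMatrix_of_add_le (by omega) (by omega), Nat.choose_symm hr] at hcol ⊢
    omega
end

section
/- Let G be an r-graph with r ≥ 1 and s ≥ 1, let {α_S} be a dependence sequence for G, and let x be a vertex of G such that α_S = 0 for every s-subset S not containing x. Then the sequence β_{S'} := α_{{x} ∪ S'}, indexed by (s−1)-subsets S' of V(G)\{x}, is a dependence sequence for the link hypergraph G/x. -/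
/-- `α` is a dependence sequence (with parameter `s`) for the hypergraph on `Fin n`
with edge set `E`. -/
def IsDependenceSeq (n s : ℕ) (E : Finset (Finset (Fin n))) (α : Finset (Fin n) → ℝ) : Prop :=
  ∀ e ∈ E, ∑ S ∈ e.powersetCard s, α S = 0

open Finset

theorem Finset.sum_powersetCard_succ_insert {ι M : Type*} [DecidableEq ι] [AddCommMonoid M]
    {x : ι} {t : Finset ι} (hx : x ∉ t) (k : ℕ) (f : Finset ι → M) :
    ∑ S ∈ (insert x t).powersetCard (k + 1), f S =
      ∑ S ∈ t.powersetCard (k + 1), f S + ∑ S ∈ t.powersetCard k, f (insert x S) := by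
  have hdisj : Disjoint (t.powersetCard (k + 1)) ((t.powersetCard k).image (insert x)) := by
    simp only [disjoint_left, mem_image, mem_powersetCard]
    rintro _ ⟨hS, -⟩ ⟨S', -, rfl⟩
    exact hx (hS (mem_insert_self x S'))
  have hinj : Set.InjOn (insert x) (t.powersetCard k : Set (Finset ι)) := fun S hS S' hS' h => by
    have hxS : x ∉ S := fun h => hx ((mem_powersetCard.1 hS).1 h)
    have hxS' : x ∉ S' := fun h => hx ((mem_powersetCard.1 hS').1 h)
    rw [← erase_insert hxS, ← erase_insert hxS', h]
  rw [powersetCard_succ_insert hx, sum_union hdisj, sum_image hinj]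

theorem stmt3_general (n s : ℕ) (hs : 1 ≤ s) (E : Finset (Finset (Fin n)))
    (α : Finset (Fin n) → ℝ)
    (hα : IsDependenceSeq n s E α) (x : Fin n)
    (hx : ∀ S : Finset (Fin n), S.card = s → x ∉ S → α S = 0) :
    IsDependenceSeq n (s - 1) ((E.filter (fun e => x ∈ e)).image (fun e => e.erase x))
      (fun S' => α (insert x S')) := by
  intro e' he'
  obtain ⟨e, ⟨heE, hxe⟩, rfl⟩ := by simpa only [mem_image, mem_filter] using he'
  obtain ⟨k, rfl⟩ : ∃ k, s = k + 1 := Nat.exists_eq_add_of_le' hs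
  have hsum := hα e heE
  rw [← insert_erase hxe, sum_powersetCard_succ_insert (notMem_erase x e)] at hsum
  have hfree : ∑ S ∈ (e.erase x).powersetCard (k + 1), α S = 0 := sum_eq_zero fun S hS =>
    hx S (mem_powersetCard.1 hS).2 fun h => notMem_erase x e ((mem_powersetCard.1 hS).1 h)
  simpa [hfree] using hsum

/-- If `α S = 0` for every `s`-set not containing `x`, then
`β S' := α (insert x S')` is a dependence sequence for the link `G/x`. -/
theorem stmt3 (n r s : ℕ) (hr : 1 ≤ r) (hs : 1 ≤ s) (E : Finset (Finset (Fin n)))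
    (hE : ∀ e ∈ E, e.card = r) (α : Finset (Fin n) → ℝ)
    (hα : IsDependenceSeq n s E α) (x : Fin n)
    (hx : ∀ S : Finset (Fin n), S.card = s → x ∉ S → α S = 0) :
    IsDependenceSeq n (s - 1) ((E.filter (fun e => x ∈ e)).image (fun e => e.erase x))
      (fun S' => α (insert x S')) :=
  stmt3_general n s hs E α hα x hx
end

section
/- Suppose G is an r-graph, x is a vertex of G, and 1 ≤ s ≤ r−1. Then rk M_s^r(G) ≥ rk M_s^r(G − x) + rk M_{s−1}^{r−1}(G/x), where ranks are over the rationals. -/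
/-! Sort the edges and the `s`-sets by whether they contain `x`. An `s`-set through `x` is never
inside an edge missing `x`, so `M_s^r(G)` is block triangular. One diagonal block is
`M_s^r(G − x)`; the other (edges and `s`-sets through `x`) becomes `M_{s−1}^{r−1}(G/x)` once `x`
is deleted from rows and columns. The rank of a block triangular matrix is at least the sum of
the ranks of its diagonal blocks. -/

/-- Inclusion matrix of the hypergraph with edge set `E` on `Fin n`, with rows the edges of
`E` and columns the `s`-subsets of `Fin n` satisfying the predicate `P`
(used to restrict the vertex set), entry `1` iff containment. -/
def incMat (n s : ℕ) (E : Finset (Finset (Fin n))) (P : Finset (Fin n) → Prop)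
    [DecidablePred P] :
    Matrix {e : Finset (Fin n) // e ∈ E} {S : Finset (Fin n) // S.card = s ∧ P S} ℚ :=
  fun e S => if (S : Finset (Fin n)) ⊆ (e : Finset (Fin n)) then 1 else 0

open Module

theorem Submodule.finrank_add_finrank_map_le {K V W : Type*} [DivisionRing K] [AddCommGroup V]
    [Module K V] [AddCommGroup W] [Module K W] {U p : Submodule K V} [FiniteDimensional K U]
    (π : V →ₗ[K] W) (hpU : p ≤ U) (hpπ : p ≤ LinearMap.ker π) :
    finrank K p + finrank K (U.map π) ≤ finrank K U := by
  have hp : finrank K p ≤ finrank K (LinearMap.ker (π.domRestrict U)) := by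
    rw [← (Submodule.comapSubtypeEquivOfLe hpU).finrank_eq, LinearMap.ker_domRestrict]
    exact Submodule.finrank_mono (Submodule.comap_mono hpπ)
  have hrank := (π.domRestrict U).finrank_range_add_finrank_ker
  rw [LinearMap.range_domRestrict] at hrank
  omega

namespace Matrix

variable {K m m₁ m₂ n n₁ n₂ : Type*} [Field K]

theorem rank_add_rank_le_rank_fromBlocks [Fintype n₁] [Fintype n₂]
    (B : Matrix m₁ n₁ K) (C : Matrix m₁ n₂ K) (D : Matrix m₂ n₂ K) :
    B.rank + D.rank ≤ (fromBlocks B C 0 D).rank := by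
  set M := fromBlocks B C 0 D
  let π : (m₁ ⊕ m₂ → K) →ₗ[K] (m₂ → K) := LinearMap.funLeft K K Sum.inr
  let extendByZero : (m₁ → K) →ₗ[K] (m₁ ⊕ m₂ → K) :=
    (LinearEquiv.sumArrowLequivProdArrow m₁ m₂ K K).symm.toLinearMap ∘ₗ LinearMap.inl K _ _
  set colsB := (LinearMap.range B.mulVecLin).map extendByZero
  have hB : B.rank = finrank K colsB :=
    (Submodule.equivMapOfInjective _ (fun _ _ h => funext fun i => congrFun h (Sum.inl i))
      _).finrank_eq
  have hD : LinearMap.range D.mulVecLin ≤ (LinearMap.range M.mulVecLin).map π := by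
    rintro _ ⟨v, rfl⟩
    exact ⟨M *ᵥ Sum.elim 0 v, ⟨_, rfl⟩, by ext; simp [π, M, fromBlocks_mulVec]⟩
  have hBM : colsB ≤ LinearMap.range M.mulVecLin := by
    rintro _ ⟨_, ⟨v, rfl⟩, rfl⟩
    exact ⟨Sum.elim v 0, by ext (i | i) <;> simp [M, extendByZero, fromBlocks_mulVec]⟩
  have hBπ : colsB ≤ LinearMap.ker π := by
    rintro _ ⟨_, ⟨v, rfl⟩, rfl⟩
    ext i
    simp [π, extendByZero]
  calc B.rank + D.rank ≤ finrank K colsB + finrank K ((LinearMap.range M.mulVecLin).map π) :=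
        hB ▸ Nat.add_le_add_left (Submodule.finrank_mono hD) _
    _ ≤ M.rank := Submodule.finrank_add_finrank_map_le π hBM hBπ

theorem rank_submatrix_add_rank_submatrix_le [Fintype n] [Fintype n₁] [Fintype n₂]
    (A : Matrix m n K) (p : m → Prop) (q : n → Prop) (hA : ∀ i j, ¬p i → q j → A i j = 0)
    {r₁ : m₁ → m} {c₁ : n₁ → n} {r₂ : m₂ → m} {c₂ : n₂ → n} (hr₁ : ∀ i, p (r₁ i))
    (hc₁ : ∀ j, q (c₁ j)) (hr₂ : ∀ i, ¬p (r₂ i)) (hc₂ : ∀ j, ¬q (c₂ j)) :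
    (A.submatrix r₁ c₁).rank + (A.submatrix r₂ c₂).rank ≤ A.rank := by
  classical
  have hblocks : A.submatrix (Equiv.sumCompl p) (Equiv.sumCompl q) =
      fromBlocks (A.submatrix (↑) (↑)) (A.submatrix (↑) (↑)) 0 (A.submatrix (↑) (↑)) := by
    ext (i | i) (j | j)
    · rfl
    · rfl
    · exact hA _ _ i.2 j.2
    · rfl
  calc _ ≤ (A.submatrix ((↑) : {i // p i} → m) ((↑) : {j // q j} → n)).rank +
        (A.submatrix ((↑) : {i // ¬p i} → m) ((↑) : {j // ¬q j} → n)).rank :=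
        add_le_add (rank_submatrix_le _ (fun i => ⟨r₁ i, hr₁ i⟩) fun j => ⟨c₁ j, hc₁ j⟩)
          (rank_submatrix_le _ (fun i => ⟨r₂ i, hr₂ i⟩) fun j => ⟨c₂ j, hc₂ j⟩)
    _ ≤ (A.submatrix (Equiv.sumCompl p) (Equiv.sumCompl q)).rank :=
        hblocks ▸ rank_add_rank_le_rank_fromBlocks _ _ _
    _ = A.rank := rank_submatrix _ _ _

end Matrix

open Finset Matrix

section incMat

variable {n : ℕ} (s : ℕ) {E E' : Finset (Finset (Fin n))} {P P' : Finset (Fin n) → Prop}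
  [DecidablePred P] [DecidablePred P']

theorem incMat_eq_submatrix_of_subset (hE : E' ⊆ E) (hP : ∀ S, P' S → P S) :
    incMat n s E' P' =
      (incMat n s E P).submatrix (fun e : {e : Finset (Fin n) // e ∈ E'} => ⟨e, hE e.2⟩)
        fun S : {S : Finset (Fin n) // S.card = s ∧ P' S} => ⟨S, S.2.1, hP S S.2.2⟩ :=
  rfl

theorem incMat_sub_one_eq_submatrix_insert {F : Finset (Finset (Fin n))} {x : Fin n}
    (hF : ∀ e ∈ F, insert x e ∈ E) (hs : 1 ≤ s) :
    incMat n (s - 1) F (fun S => x ∉ S) =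
      (incMat n s E fun _ => True).submatrix
        (fun e : {e : Finset (Fin n) // e ∈ F} => ⟨insert x e, hF e e.2⟩)
        fun S : {S : Finset (Fin n) // S.card = s - 1 ∧ x ∉ S} =>
          ⟨insert x S, by rw [card_insert_of_notMem S.2.2, S.2.1]; omega, trivial⟩ := by
  ext e S
  simp [incMat, insert_subset_insert_iff S.2.2]

end incMat

theorem insert_mem_of_mem_image_erase {n : ℕ} {E : Finset (Finset (Fin n))} {x : Fin n}
    {e : Finset (Fin n)} (he : e ∈ (E.filter fun e => x ∈ e).image fun e => e.erase x) :
    insert x e ∈ E := by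
  obtain ⟨a, ha, rfl⟩ := mem_image.1 he
  rw [insert_erase (mem_filter.1 ha).2]
  exact (mem_filter.1 ha).1

theorem stmt4_general (n s : ℕ) (hs1 : 1 ≤ s)
    (E : Finset (Finset (Fin n))) (x : Fin n) :
    (incMat n s E (fun _ => True)).rank ≥
      (incMat n s (E.filter (fun e => x ∉ e)) (fun S => x ∉ S)).rank +
      (incMat n (s - 1) ((E.filter (fun e => x ∈ e)).image (fun e => e.erase x))
        (fun S => x ∉ S)).rank := by
  rw [ge_iff_le, add_comm,
    incMat_sub_one_eq_submatrix_insert s (fun _ => insert_mem_of_mem_image_erase) hs1,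
    incMat_eq_submatrix_of_subset s (filter_subset _ E) fun _ _ => trivial]
  exact rank_submatrix_add_rank_submatrix_le _ (fun e => x ∈ e.1) (fun S => x ∈ S.1)
    (fun e S he hS => if_neg fun h => he (h hS)) (fun _ => mem_insert_self _ _)
    (fun _ => mem_insert_self _ _) (fun e => (mem_filter.1 e.2).2) fun S => S.2.2

/-- `rk M_s^r(G) ≥ rk M_s^r(G − x) + rk M_{s−1}^{r−1}(G/x)`. -/
theorem stmt4 (n r s : ℕ) (hs1 : 1 ≤ s) (hs2 : s ≤ r - 1)
    (E : Finset (Finset (Fin n))) (hE : ∀ e ∈ E, e.card = r) (x : Fin n) :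
    (incMat n s E (fun _ => True)).rank ≥
      (incMat n s (E.filter (fun e => x ∉ e)) (fun S => x ∉ S)).rank +
      (incMat n (s - 1) ((E.filter (fun e => x ∈ e)).image (fun e => e.erase x))
        (fun S => x ∉ S)).rank :=
  stmt4_general n s hs1 E x
end

section
/- Let n ≥ 2r + s and let F be a family of r-subsets of [n] with |F| < C(n, r−s)/C(r, s). Then rk M_s^r(K_n^r − F) = C(n, s) over the rationals. -/
/-! A kernel vector `x` of `M_s^r(K_V^r − F)`, viewed as a function on `s`-sets, vanishes by
induction on `s`. For `v ≠ w`, the function `T ↦ x (T + v) - x (T + w)` on `(s-1)`-subsets of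
`V ∖ {v, w}` is annihilated by every `(r-1)`-set `e` with `e + v, e + w ∉ F`; at most `|F|` sets `e`
fail this, and `C(n, r-s) C(r-1, s-1) ≤ C(n-2, r-s) C(r, s)` for `n ≥ 2r + s` keeps the size
condition alive. So `x` is invariant under exchanging one element, hence constant on `s`-sets, and
an edge outside `F` gives `C(r, s) • x = 0`. -/

open Finset

namespace Nat

theorem choose_le_choose_of_le_of_two_mul_le {n k r : ℕ} (hkr : k ≤ r) (hr : 2 * r ≤ n) :
    n.choose k ≤ n.choose r := by
  induction r, hkr using Nat.le_induction with
  | base => rfl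
  | succ r hkr ih => exact (ih (by omega)).trans (choose_le_succ_of_lt_half_left (by omega))

theorem choose_mul_choose_le_choose_sub_two_mul_choose {n r t : ℕ} (ht : 1 ≤ t) (htr : t ≤ r)
    (hn : 2 * r + t ≤ n) :
    n.choose (r - t) * (r - 1).choose (t - 1) ≤ (n - 2).choose (r - t) * r.choose t := by
  obtain ⟨k, u, d, rfl, rfl, rfl⟩ : ∃ k u d, r = k + (u + 1) ∧ t = u + 1 ∧
      n = k + (k + 3 * u + 1 + d) + 2 := ⟨r - t, t - 1, n - 2 * r - t, by omega, by omega, by omega⟩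
  -- `hpoly` is the claim after cancelling `C(n-2, k) / C(n, k) = (n-k)(n-k-1) / (n(n-1))` and
  -- `C(r-1, t-1) / C(r, t) = t / r`.
  have hpoly : (k + (k + 3 * u + 1 + d) + 2) * (k + (k + 3 * u + 1 + d) + 1) * (u + 1)
      ≤ (k + (u + 1)) * ((k + 3 * u + 1 + d + 2) * (k + 3 * u + 1 + d + 1)) := by
    ring_nf; omega
  set m := k + 3 * u + 1 + d
  simp only [Nat.add_sub_cancel, show k + (u + 1) - 1 = k + u by omega]
  have hn₁ := choose_mul_succ_eq (k + m) k
  have hn₂ := choose_mul_succ_eq (k + m + 1) k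
  have hr := add_one_mul_choose_eq (k + u) u
  rw [show k + m + 1 - k = m + 1 by omega] at hn₁
  rw [show k + m + 1 + 1 - k = m + 2 by omega] at hn₂
  rw [show k + u + 1 = k + (u + 1) by omega] at hr
  refine Nat.le_of_mul_le_mul_right (c := (u + 1) * ((m + 2) * (m + 1))) ?_ (by positivity)
  calc (k + m + 2).choose k * (k + u).choose u * ((u + 1) * ((m + 2) * (m + 1)))
      = (k + m).choose k * (k + u).choose u * ((k + m + 2) * (k + m + 1) * (u + 1)) := by
        linear_combination ((k + u).choose u * (u + 1) * (m + 1)) * hn₂.symm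
          + ((k + u).choose u * (u + 1) * (k + m + 2)) * hn₁.symm
      _ ≤ (k + m).choose k * (k + u).choose u * ((k + (u + 1)) * ((m + 2) * (m + 1))) := by gcongr
      _ = (k + m).choose k * (k + (u + 1)).choose (u + 1) * ((u + 1) * ((m + 2) * (m + 1))) := by
        linear_combination ((k + m).choose k * ((m + 2) * (m + 1))) * hr

theorem mul_choose_pred_lt_of_le_of_mul_choose_lt {N r s a b : ℕ} (hab : a ≤ b) (hs : s + 1 ≤ r)
    (hN : 2 * r + (s + 1) ≤ N) (h : b * r.choose (s + 1) < N.choose (r - (s + 1))) :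
    a * (r - 1).choose s < (N - 2).choose (r - 1 - s) := by
  refine Nat.lt_of_mul_lt_mul_right (a := r.choose (s + 1)) ?_
  calc a * (r - 1).choose s * r.choose (s + 1)
      ≤ b * r.choose (s + 1) * (r - 1).choose s := by rw [mul_right_comm]; gcongr
    _ < N.choose (r - (s + 1)) * (r - 1).choose s :=
      Nat.mul_lt_mul_of_pos_right h (choose_pos (by omega))
    _ ≤ (N - 2).choose (r - 1 - s) * r.choose (s + 1) := by
      rw [show r - 1 - s = r - (s + 1) by omega]
      exact choose_mul_choose_le_choose_sub_two_mul_choose (by omega) hs hN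

end Nat

namespace Finset

variable {α : Type*}

theorem exists_subset_card_eq_notMem {V : Finset α} {F : Finset (Finset α)} {r s : ℕ}
    (hs : s ≤ r) (hV : 2 * r ≤ #V) (hF : #F * r.choose s < (#V).choose (r - s)) :
    ∃ e ⊆ V, #e = r ∧ e ∉ F := by
  have hlt : #F < #(V.powersetCard r) := calc
    #F ≤ #F * r.choose s := Nat.le_mul_of_pos_right _ (Nat.choose_pos hs)
    _ < (#V).choose (r - s) := hF
    _ ≤ (#V).choose r := Nat.choose_le_choose_of_le_of_two_mul_le (by omega) hV
    _ = #(V.powersetCard r) := (card_powersetCard r V).symm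
  obtain ⟨e, he, heF⟩ := exists_mem_notMem_of_card_lt_card hlt
  exact ⟨e, (mem_powersetCard.1 he).1, (mem_powersetCard.1 he).2, heF⟩

variable [DecidableEq α]

theorem sum_powersetCard_succ_insert_s5 {β : Type*} [AddCommMonoid β] {e : Finset α} {u : α}
    (hu : u ∉ e) (k : ℕ) (f : Finset α → β) :
    ∑ S ∈ (insert u e).powersetCard (k + 1), f S =
      ∑ S ∈ e.powersetCard (k + 1), f S + ∑ S ∈ e.powersetCard k, f (insert u S) := by
  have hu' : ∀ S ∈ e.powersetCard k, u ∉ S := fun S hS ↦ notMem_mono (mem_powersetCard.1 hS).1 hu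
  rw [powersetCard_succ_insert hu, sum_union, sum_image]
  · exact fun S hS T hT ↦ insert_erase_invOn.2.injOn (hu' S hS) (hu' T hT)
  · rw [disjoint_left]
    rintro _ hA hA'
    obtain ⟨S, -, rfl⟩ := mem_image.1 hA'
    exact notMem_mono (mem_powersetCard.1 hA).1 hu (mem_insert_self u S)

theorem sum_powersetCard_insert_sub_insert_eq_zero {M : Type*} [AddCommGroup M]
    {x : Finset α → M} {e : Finset α} {v w : α} {k : ℕ} (hve : v ∉ e) (hwe : w ∉ e)
    (hv : ∑ S ∈ (insert v e).powersetCard (k + 1), x S = 0)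
    (hw : ∑ S ∈ (insert w e).powersetCard (k + 1), x S = 0) :
    ∑ S ∈ e.powersetCard k, (x (insert v S) - x (insert w S)) = 0 := by
  rw [sum_powersetCard_succ_insert_s5 hve] at hv
  rw [sum_powersetCard_succ_insert_s5 hwe] at hw
  rw [sum_sub_distrib, sub_eq_zero]
  exact add_left_cancel (hv.trans hw.symm)

theorem eq_of_forall_insert_eq_insert {β : Type*} {V : Finset α} {k : ℕ} {f : Finset α → β}
    (hf : ∀ S ⊆ V, #S = k → ∀ v ∈ V, ∀ w ∈ V, v ∉ S → w ∉ S → f (insert v S) = f (insert w S))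
    {A B : Finset α} (hA : A ⊆ V) (hB : B ⊆ V) (hAk : #A = k + 1) (hBk : #B = k + 1) :
    f A = f B := by
  induction hd : #(A \ B) generalizing A with
  | zero =>
    rw [eq_of_subset_of_card_le (sdiff_eq_empty_iff_subset.1 (card_eq_zero.1 hd)) (by omega)]
  | succ d ih =>
    obtain ⟨v, hv⟩ : (A \ B).Nonempty := card_pos.1 (by omega)
    obtain ⟨w, hw⟩ : (B \ A).Nonempty := card_pos.1 (by rw [← card_sdiff_comm (by omega)]; omega)
    rw [mem_sdiff] at hv hw
    have hvA : insert v (A.erase v) = A := insert_erase hv.1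
    calc f A = f (insert w (A.erase v)) := by
          rw [← hf (A.erase v) ((erase_subset v A).trans hA) (by rw [card_erase_of_mem hv.1]; omega)
            v (hA hv.1) w (hB hw.1) (notMem_erase v A) (fun h ↦ hw.2 (mem_of_mem_erase h)), hvA]
      _ = f B := by
        refine ih (insert_subset (hB hw.1) ((erase_subset v A).trans hA)) ?_ ?_
        · rw [card_insert_of_notMem (fun h ↦ hw.2 (mem_of_mem_erase h)), card_erase_of_mem hv.1]
          omega
        · have hsdiff : insert w (A.erase v) \ B = (A \ B).erase v := by
            ext a
            simp only [mem_sdiff, mem_insert, mem_erase]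
            constructor
            · rintro ⟨rfl | h, ha⟩
              exacts [absurd hw.1 ha, ⟨h.1, h.2, ha⟩]
            · exact fun ⟨hav, haA, haB⟩ ↦ ⟨Or.inr ⟨hav, haA⟩, haB⟩
          rw [hsdiff, card_erase_of_mem]
          · omega
          · exact mem_sdiff.2 hv

theorem card_filter_insert_mem_or_insert_mem_le (F G : Finset (Finset α)) {v w : α}
    (hvw : v ≠ w) (hG : ∀ e ∈ G, v ∉ e ∧ w ∉ e) :
    #{e ∈ G | insert v e ∈ F ∨ insert w e ∈ F} ≤ #F := by
  refine card_le_card_of_injOn (fun e ↦ if insert v e ∈ F then insert v e else insert w e)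
    (fun e he ↦ ?_) (fun a ha b hb hab ↦ ?_)
  · rw [mem_coe, mem_filter] at he
    simp only [mem_coe]
    split_ifs <;> tauto
  · rw [mem_coe, mem_filter] at ha hb
    obtain ⟨hva, hwa⟩ := hG a ha.1
    obtain ⟨hvb, hwb⟩ := hG b hb.1
    simp only at hab
    split_ifs at hab
    · exact insert_erase_invOn.2.injOn hva hvb hab
    · exact absurd (hab ▸ mem_insert_self v a) (by simp [hvw, hvb])
    · exact absurd (hab ▸ mem_insert_self v b) (by simp [hvw, hva])
    · exact insert_erase_invOn.2.injOn hwa hwb hab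

end Finset

section Kernel

variable {α M : Type*} [AddCommGroup M] [IsAddTorsionFree M]

theorem eq_zero_of_forall_eq_of_sum_powersetCard_eq_zero {r s : ℕ} {V : Finset α}
    {F : Finset (Finset α)} {x : Finset α → M} (hs : s ≤ r) (hV : 2 * r ≤ #V)
    (hF : #F * r.choose s < (#V).choose (r - s))
    (hx : ∀ e ⊆ V, #e = r → e ∉ F → ∑ S ∈ e.powersetCard s, x S = 0)
    {S : Finset α} (hconst : ∀ A ⊆ V, #A = s → x A = x S) : x S = 0 := by
  obtain ⟨e, heV, her, heF⟩ := exists_subset_card_eq_notMem hs hV hF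
  have hsum := hx e heV her heF
  rw [sum_congr rfl fun A hA ↦ hconst A ((mem_powersetCard.1 hA).1.trans heV)
    (mem_powersetCard.1 hA).2, sum_const, card_powersetCard, her, nsmul_eq_zero_iff] at hsum
  exact hsum.resolve_right (Nat.choose_pos hs).ne'

variable [DecidableEq α]

theorem eq_zero_of_forall_sum_powersetCard_eq_zero {s r : ℕ} {V : Finset α}
    {F : Finset (Finset α)} {x : Finset α → M} (hs : s ≤ r) (hV : 2 * r + s ≤ #V)
    (hF : #F * r.choose s < (#V).choose (r - s))
    (hx : ∀ e ⊆ V, #e = r → e ∉ F → ∑ S ∈ e.powersetCard s, x S = 0)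
    {S : Finset α} (hSV : S ⊆ V) (hS : #S = s) : x S = 0 := by
  induction s generalizing r V F x S with
  | zero =>
    refine eq_zero_of_forall_eq_of_sum_powersetCard_eq_zero hs (by omega) hF hx fun A _ hA ↦ ?_
    rw [card_eq_zero.1 hA, card_eq_zero.1 hS]
  | succ s ih =>
    refine eq_zero_of_forall_eq_of_sum_powersetCard_eq_zero hs (by omega) hF hx
      fun A hAV hA ↦ eq_of_forall_insert_eq_insert ?_ hAV hSV hA hS
    intro T hTV hT v hv w hw hvT hwT
    rcases eq_or_ne v w with rfl | hvw
    · rfl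
    set V' := (V.erase v).erase w
    set F' := {e ∈ V'.powersetCard (r - 1) | insert v e ∈ F ∨ insert w e ∈ F}
    have hvV' : v ∉ V' := fun h ↦ notMem_erase v V (mem_of_mem_erase h)
    have hwV' : w ∉ V' := notMem_erase w _
    have hV'V : V' ⊆ V := (erase_subset w _).trans (erase_subset v V)
    have hV' : #V' = #V - 2 := by
      rw [card_erase_of_mem (mem_erase.2 ⟨hvw.symm, hw⟩), card_erase_of_mem hv]
      omega
    have hF' : #F' * (r - 1).choose s < (#V').choose (r - 1 - s) := by
      rw [hV']
      refine Nat.mul_choose_pred_lt_of_le_of_mul_choose_lt ?_ hs hV hF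
      exact card_filter_insert_mem_or_insert_mem_le F _ hvw fun e he ↦
        ⟨notMem_mono (mem_powersetCard.1 he).1 hvV', notMem_mono (mem_powersetCard.1 he).1 hwV'⟩
    have hx' : ∀ e ⊆ V', #e = r - 1 → e ∉ F' →
        ∑ S ∈ e.powersetCard s, (x (insert v S) - x (insert w S)) = 0 := by
      intro e heV' her heF'
      have hve : v ∉ e := notMem_mono heV' hvV'
      have hwe : w ∉ e := notMem_mono heV' hwV'
      have he : e ∈ V'.powersetCard (r - 1) := mem_powersetCard.2 ⟨heV', her⟩
      have hvF : insert v e ∉ F := fun h ↦ heF' (mem_filter.2 ⟨he, .inl h⟩)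
      have hwF : insert w e ∉ F := fun h ↦ heF' (mem_filter.2 ⟨he, .inr h⟩)
      have hv0 := hx _ (insert_subset hv (heV'.trans hV'V))
        (by rw [card_insert_of_notMem hve]; omega) hvF
      have hw0 := hx _ (insert_subset hw (heV'.trans hV'V))
        (by rw [card_insert_of_notMem hwe]; omega) hwF
      exact sum_powersetCard_insert_sub_insert_eq_zero hve hwe hv0 hw0
    have hTV' : T ⊆ V' := by
      rw [subset_erase, subset_erase]
      exact ⟨⟨hTV, hvT⟩, hwT⟩
    exact sub_eq_zero.1 (ih (by omega) (by omega) hF' hx' hTV' hT)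

end Kernel

open scoped Matrix

theorem inclusionMatrix_mulVec_apply {n s : ℕ} {E : Finset (Finset (Fin n))}
    (x : {S : Finset (Fin n) // #S = s} → ℚ) (e : E) :
    (inclusionMatrix n s E *ᵥ x) e =
      ∑ S ∈ (e : Finset (Fin n)).powersetCard s, if h : #S = s then x ⟨S, h⟩ else 0 := by
  have he : (e : Finset (Fin n)).powersetCard s =
      {S ∈ (univ : Finset (Fin n)).powersetCard s | S ⊆ (e : Finset (Fin n))} := by
    ext S
    simp [and_comm]
  rw [he, sum_filter, sum_subtype (p := fun S ↦ #S = s) (F := inferInstance) _ (by simp)]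
  simp only [Matrix.mulVec, dotProduct, inclusionMatrix, boole_mul]
  exact sum_congr rfl fun S _ ↦ by simp [S.2]

theorem inclusionMatrix_mulVecLin_injective {n r s : ℕ} {F : Finset (Finset (Fin n))}
    (hs : s ≤ r) (hn : 2 * r + s ≤ n) (hF : #F * r.choose s < n.choose (r - s)) :
    Function.Injective (inclusionMatrix n s (univ.powersetCard r \ F)).mulVecLin := by
  rw [← LinearMap.ker_eq_bot, LinearMap.ker_eq_bot']
  intro x hx
  funext S
  have hxS := eq_zero_of_forall_sum_powersetCard_eq_zero (V := univ)
    (x := fun S ↦ if h : #S = s then x ⟨S, h⟩ else 0) hs (by simpa) (by simpa) ?_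
    (subset_univ S.1) S.2
  · simpa [S.2] using hxS
  · intro e _ her heF
    rw [← inclusionMatrix_mulVec_apply x
      ⟨e, mem_sdiff.2 ⟨mem_powersetCard.2 ⟨subset_univ e, her⟩, heF⟩⟩]
    exact congrFun hx _

theorem stmt5_general (n r s : ℕ) (hs : s ≤ r) (hn : 2 * r + s ≤ n)
    (F : Finset (Finset (Fin n)))
    (hcard : (F.card : ℚ) < (n.choose (r - s) : ℚ) / (r.choose s : ℚ)) :
    (inclusionMatrix n s (((Finset.univ : Finset (Fin n)).powersetCard r) \ F)).rank
      = n.choose s := by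
  have hF : #F * r.choose s < n.choose (r - s) := by
    have hpos : (0 : ℚ) < r.choose s := by exact_mod_cast Nat.choose_pos hs
    exact_mod_cast (lt_div_iff₀ hpos).1 hcard
  rw [Matrix.rank, LinearMap.finrank_range_of_inj (inclusionMatrix_mulVecLin_injective hs hn hF),
    Module.finrank_fintype_fun_eq_card, Fintype.card_finset_len, Fintype.card_fin]

theorem stmt5 (n r s : ℕ) (hs : s ≤ r) (hn : 2 * r + s ≤ n)
    (F : Finset (Finset (Fin n))) (hF : F ⊆ (Finset.univ : Finset (Fin n)).powersetCard r)
    (hcard : (F.card : ℚ) < (n.choose (r - s) : ℚ) / (r.choose s : ℚ)) :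
    (inclusionMatrix n s (((Finset.univ : Finset (Fin n)).powersetCard r) \ F)).rank
      = n.choose s :=
  stmt5_general n r s hs hn F hcard
end

section
/- For all r ≥ s ≥ 0 there exist positive constants ε, α and n₁ (depending on r and s) such that: if n ≥ n₁ and F is a family of r-subsets of [n] with |F| ≤ ε·n·C(n−s, r−s), and every s-subset of [n] is contained in fewer than α·C(n−s, r−s) members of F, then rk M_s^r(K_n^r − F) = C(n, s). -/
open Finset

theorem Nat.choose_add_eq_sum_range (m : ℕ) {i s k : ℕ} (hi : i ≤ s) (hk : s ≤ k) :
    (i + m).choose k = ∑ j ∈ range (s + 1), i.choose j * m.choose (k - j) := by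
  rw [Nat.add_choose_eq, Finset.Nat.sum_antidiagonal_eq_sum_range_succ_mk]
  refine (sum_subset (range_subset_range.2 (by omega)) fun j _ hj ↦ ?_).symm
  rw [Nat.choose_eq_zero_of_lt (by simp only [mem_range, not_lt] at hj; omega), zero_mul]

theorem Nat.choose_add_le_two_pow_mul_choose {k m : ℕ} (h : 2 * k ≤ m) :
    ∀ s, (m + s).choose k ≤ 2 ^ s * m.choose k
  | 0 => by simp
  | s + 1 => by
    have ih := choose_add_le_two_pow_mul_choose h s
    obtain _ | k := k
    · simp [Nat.one_le_two_pow]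
    have hmono : (m + s).choose k ≤ (m + s).choose (k + 1) :=
      choose_le_succ_of_lt_half_left (by omega)
    rw [← add_assoc, choose_succ_succ', pow_succ]
    linarith

theorem Finset.sum_sq_sum_filter {ι κ R : Type*} [CommSemiring R] (X : Finset κ) (Y : Finset ι)
    (p : ι → κ → Prop) [∀ i x, Decidable (p i x)] (f : ι → R) :
    ∑ x ∈ X, (∑ i ∈ Y with p i x, f i) ^ 2 =
      ∑ i ∈ Y, ∑ j ∈ Y, #{x ∈ X | p i x ∧ p j x} * (f i * f j) := by
  simp_rw [sq, sum_filter, sum_mul_sum, natCast_card_filter, sum_mul]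
  rw [sum_comm]
  refine sum_congr rfl fun i _ ↦ ?_
  rw [sum_comm]
  refine sum_congr rfl fun j _ ↦ sum_congr rfl fun x _ ↦ ?_
  split_ifs <;> simp_all

section

variable {α : Type*} [Fintype α] [DecidableEq α] {r s : ℕ}

/-- Stated through complements so that no truncated `r - #A` occurs: for `r < #A` both sides
vanish. -/
theorem card_powersetCard_filter_superset (hr : r ≤ Fintype.card α) (A : Finset α) :
    #{e ∈ powersetCard r univ | A ⊆ e} =
      (Fintype.card α - #A).choose (Fintype.card α - r) := by
  rw [← card_compl, ← card_powersetCard]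
  refine card_bij' (fun e _ ↦ eᶜ) (fun t _ ↦ tᶜ) (fun e he ↦ ?_) (fun t ht ↦ ?_)
    (fun e _ ↦ compl_compl e) (fun t _ ↦ compl_compl t)
  · simp only [mem_filter, mem_powersetCard_univ] at he
    simp only [mem_powersetCard, compl_subset_compl, card_compl]
    exact ⟨he.2, by rw [he.1]⟩
  · simp only [mem_powersetCard] at ht
    simp only [mem_filter, mem_powersetCard_univ, card_compl]
    exact ⟨by omega, subset_compl_comm.1 ht.1⟩

theorem powersetCard_filter_subset (j : ℕ) (B : Finset α) :
    {J ∈ powersetCard j (univ : Finset α) | J ⊆ B} = powersetCard j B := by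
  ext J
  simp [mem_powersetCard, and_comm]

theorem card_powersetCard_filter_superset_pair (hs : s ≤ r) (hr : r + s ≤ Fintype.card α)
    {S T : Finset α} (hS : #S = s) (hT : #T = s) :
    #{e ∈ powersetCard r univ | S ⊆ e ∧ T ⊆ e} =
      ∑ j ∈ range (s + 1), (Fintype.card α - 2 * s).choose (Fintype.card α - r - j) *
        #{J ∈ powersetCard j univ | J ⊆ S ∧ J ⊆ T} := by
  simp_rw [← union_subset_iff, ← subset_inter_iff]
  rw [card_powersetCard_filter_superset (r := r) (by omega)]
  simp_rw [powersetCard_filter_subset, card_powersetCard]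
  have hinter : #(S ∩ T) ≤ s := hS ▸ card_le_card inter_subset_left
  have hunion : #(S ∪ T) ≤ Fintype.card α := card_le_univ _
  have hcard := card_union_add_card_inter S T
  rw [show Fintype.card α - #(S ∪ T) = #(S ∩ T) + (Fintype.card α - 2 * s) by omega,
    Nat.choose_add_eq_sum_range _ hinter (by omega)]
  simp_rw [mul_comm]

/-- Wilson's decomposition of `WᵀW`, read as an identity of quadratic forms. -/
theorem sum_sq_sum_filter_subset_eq_sum_choose_mul (hs : s ≤ r) (hr : r + s ≤ Fintype.card α)
    {R : Type*} [CommSemiring R] (f : Finset α → R) :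
    ∑ e ∈ powersetCard r univ, (∑ S ∈ powersetCard s univ with S ⊆ e, f S) ^ 2 =
      ∑ j ∈ range (s + 1), ((Fintype.card α - 2 * s).choose (Fintype.card α - r - j) : R) *
        ∑ J ∈ powersetCard j univ, (∑ S ∈ powersetCard s univ with J ⊆ S, f S) ^ 2 := by
  simp_rw [sum_sq_sum_filter, mul_sum]
  rw [sum_comm (s := range _)]
  refine sum_congr rfl fun S hS ↦ ?_
  rw [sum_comm (s := range _)]
  refine sum_congr rfl fun T hT ↦ ?_
  rw [mem_powersetCard_univ] at hS hT
  rw [card_powersetCard_filter_superset_pair hs hr hS hT]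
  push_cast
  rw [sum_mul]
  exact sum_congr rfl fun j _ ↦ by ring

variable {R : Type*} [CommRing R] [LinearOrder R] [IsStrictOrderedRing R]

theorem choose_mul_sum_sq_le_sum_sq_sum_filter_subset (hs : s ≤ r)
    (hr : r + s ≤ Fintype.card α) (f : Finset α → R) :
    ((Fintype.card α - 2 * s).choose (r - s) : R) * ∑ S ∈ powersetCard s univ, f S ^ 2 ≤
      ∑ e ∈ powersetCard r univ, (∑ S ∈ powersetCard s univ with S ⊆ e, f S) ^ 2 := by
  have hcoeff : (Fintype.card α - 2 * s).choose (Fintype.card α - r - s) =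
      (Fintype.card α - 2 * s).choose (r - s) :=
    Nat.choose_symm_of_eq_add (by omega)
  have hdiag : ∑ J ∈ powersetCard s univ, (∑ S ∈ powersetCard s univ with J ⊆ S, f S) ^ 2 =
      ∑ S ∈ powersetCard s univ, f S ^ 2 := by
    refine sum_congr rfl fun J hJ ↦ ?_
    rw [mem_powersetCard_univ] at hJ
    have : {S ∈ powersetCard s (univ : Finset α) | J ⊆ S} = {J} := by
      ext S
      simp only [mem_filter, mem_powersetCard_univ, mem_singleton]
      constructor
      · rintro ⟨hS, hJS⟩
        exact (eq_of_subset_of_card_le hJS (by omega)).symm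
      · rintro rfl
        exact ⟨hJ, subset_refl _⟩
    rw [this, sum_singleton]
  rw [sum_sq_sum_filter_subset_eq_sum_choose_mul hs hr, ← hcoeff, ← hdiag, sum_range_succ]
  exact le_add_of_nonneg_left (sum_nonneg fun j _ ↦ by positivity)

theorem sum_sq_sum_filter_subset_le {F : Finset (Finset α)} (hF : F ⊆ powersetCard r univ)
    (f : Finset α → R) :
    ∑ e ∈ F, (∑ S ∈ powersetCard s univ with S ⊆ e, f S) ^ 2 ≤
      r.choose s * ∑ S ∈ powersetCard s univ, #{e ∈ F | S ⊆ e} * f S ^ 2 := by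
  calc _ ≤ ∑ e ∈ F, r.choose s * ∑ S ∈ powersetCard s univ with S ⊆ e, f S ^ 2 := by
        refine sum_le_sum fun e he ↦ ?_
        have hcard : #{S ∈ powersetCard s univ | S ⊆ e} = r.choose s := by
          rw [powersetCard_filter_subset, card_powersetCard, mem_powersetCard_univ.1 (hF he)]
        exact hcard ▸ sq_sum_le_card_mul_sum_sq
    _ = _ := by
        rw [← mul_sum, sum_comm' (t' := powersetCard s univ) (s' := fun S ↦ {e ∈ F | S ⊆ e})
          fun e S ↦ by simp only [mem_filter]; tauto]
        simp_rw [sum_const, nsmul_eq_mul]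

theorem eq_zero_of_sum_filter_subset_eq_zero (hs : s ≤ r) (hr : 2 * r ≤ Fintype.card α)
    {F : Finset (Finset α)} (hF : F ⊆ powersetCard r univ)
    (hdeg : ∀ S : Finset α, #S = s →
      2 ^ (s + 1) * r.choose s * #{e ∈ F | S ⊆ e} ≤ (Fintype.card α - s).choose (r - s))
    {f : Finset α → R}
    (hf : ∀ e ∈ powersetCard r univ \ F, ∑ S ∈ powersetCard s univ with S ⊆ e, f S = 0)
    {S : Finset α} (hS : #S = s) : f S = 0 := by
  set c := (Fintype.card α - 2 * s).choose (r - s)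
  set A := ∑ S ∈ powersetCard s univ, f S ^ 2
  have hc : 0 < c := Nat.choose_pos (by omega)
  have hgrow : (Fintype.card α - s).choose (r - s) ≤ 2 ^ s * c := by
    have := Nat.choose_add_le_two_pow_mul_choose (k := r - s) (m := Fintype.card α - 2 * s)
      (by omega) s
    rwa [show Fintype.card α - 2 * s + s = Fintype.card α - s by omega] at this
  have hlow : c * A ≤ r.choose s * ∑ S ∈ powersetCard s univ, #{e ∈ F | S ⊆ e} * f S ^ 2 :=
    calc c * A ≤ ∑ e ∈ powersetCard r univ, (∑ S ∈ powersetCard s univ with S ⊆ e, f S) ^ 2 :=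
          choose_mul_sum_sq_le_sum_sq_sum_filter_subset hs (by omega) f
      _ = ∑ e ∈ F, (∑ S ∈ powersetCard s univ with S ⊆ e, f S) ^ 2 := by
          rw [← sum_sdiff hF, sum_eq_zero fun e he ↦ by rw [hf e he, sq, zero_mul], zero_add]
      _ ≤ _ := sum_sq_sum_filter_subset_le hF f
  have hup : 2 ^ (s + 1) * (r.choose s * ∑ S ∈ powersetCard s univ, #{e ∈ F | S ⊆ e} * f S ^ 2)
      ≤ 2 ^ s * c * A :=
    calc _ = ∑ S ∈ powersetCard s univ,
            ((2 ^ (s + 1) * r.choose s * #{e ∈ F | S ⊆ e} : ℕ) : R) * f S ^ 2 := by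
          simp_rw [mul_sum]
          push_cast
          exact sum_congr rfl fun S _ ↦ by ring
      _ ≤ ∑ S ∈ powersetCard s univ, ((2 ^ s * c : ℕ) : R) * f S ^ 2 := by
          refine sum_le_sum fun S hS ↦ mul_le_mul_of_nonneg_right ?_ (sq_nonneg _)
          exact_mod_cast (hdeg S (mem_powersetCard_univ.1 hS)).trans hgrow
      _ = 2 ^ s * c * A := by push_cast; rw [mul_sum]
  have hA : A = 0 := by
    have hlow' := mul_le_mul_of_nonneg_left hlow (by positivity : (0 : R) ≤ 2 ^ (s + 1))
    rw [pow_succ] at hlow' hup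
    have : 2 ^ s * c * A ≤ 0 := by linarith
    exact le_antisymm (nonpos_of_mul_nonpos_right this (by positivity))
      (sum_nonneg fun S _ ↦ sq_nonneg _)
  exact pow_eq_zero_iff two_ne_zero |>.1 <|
    (sum_eq_zero_iff_of_nonneg fun S _ ↦ sq_nonneg (f S)).1 hA S (mem_powersetCard_univ.2 hS)

end

theorem rank_inclusionMatrix_eq_choose {n s : ℕ} {E : Finset (Finset (Fin n))}
    (h : ∀ f : Finset (Fin n) → ℚ, (∀ e ∈ E, ∑ S ∈ powersetCard s univ with S ⊆ e, f S = 0) →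
      ∀ S : Finset (Fin n), #S = s → f S = 0) :
    (inclusionMatrix n s E).rank = n.choose s := by
  rw [Matrix.rank, LinearMap.finrank_range_of_inj, Module.finrank_fintype_fun_eq_card,
    Fintype.card_finset_len, Fintype.card_fin]
  rw [← LinearMap.ker_eq_bot, LinearMap.ker_eq_bot']
  intro x hx
  set f : Finset (Fin n) → ℚ := fun S ↦ if hS : #S = s then x ⟨S, hS⟩ else 0
  have hrow : ∀ e ∈ E, ∑ S ∈ powersetCard s univ with S ⊆ e, f S = 0 := by
    intro e he
    have hxe := congrFun hx ⟨e, he⟩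
    rw [Matrix.mulVecLin_apply, Pi.zero_apply, Matrix.mulVec, dotProduct] at hxe
    rw [← hxe, sum_filter, sum_subtype _ fun S ↦ mem_powersetCard_univ]
    refine sum_congr rfl fun S _ ↦ ?_
    simp [inclusionMatrix, f, S.2]
  funext S
  simpa [f, S.2] using h f hrow S S.2

theorem stmt6 (r s : ℕ) (hs : s ≤ r) :
    ∃ ε α : ℝ, ∃ n₁ : ℕ, 0 < ε ∧ 0 < α ∧ 0 < n₁ ∧
      ∀ n : ℕ, n₁ ≤ n →
        ∀ F : Finset (Finset (Fin n)),
          F ⊆ (Finset.univ : Finset (Fin n)).powersetCard r →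
          (F.card : ℝ) ≤ ε * n * ((n - s).choose (r - s) : ℝ) →
          (∀ S : Finset (Fin n), S.card = s →
            ((F.filter (fun e => S ⊆ e)).card : ℝ) < α * ((n - s).choose (r - s) : ℝ)) →
          (inclusionMatrix n s (((Finset.univ : Finset (Fin n)).powersetCard r) \ F)).rank
            = n.choose s := by
  have hrs : (0 : ℝ) < r.choose s := by exact_mod_cast Nat.choose_pos hs
  refine ⟨1, 1 / (2 ^ (s + 1) * r.choose s), 2 * r + 1, one_pos, by positivity, by omega, ?_⟩
  intro n hn F hF _ hdeg
  refine rank_inclusionMatrix_eq_choose fun f hf S hS ↦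
    eq_zero_of_sum_filter_subset_eq_zero hs (by rw [Fintype.card_fin]; omega) hF (fun S hS ↦ ?_) hf hS
  have hS := hdeg S hS
  rw [one_div_mul_eq_div, lt_div_iff₀ (by positivity)] at hS
  simp only [Fintype.card_fin]
  exact_mod_cast (mul_comm _ _).trans_le hS.le
end

section
/- For any real α ∈ (0,1) and integers r > s ≥ 1, there exist constants 0 < γ₀ < γ₁ < 1 and n₂ > 0 such that for all integers n ≥ n₂, t ≤ γ₀·n and p ≥ γ₁·n with p ≤ n, we have α·N(n, p, r, s) > N(n, t, r, s), where N(n,t,r,s) = C(n−s+1, r−s+1) − C(n−s+1−t, r−s+1). -/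
/-!
Write `m = n - s + 1` and `k = r - s`, so that `N(n,t,r,s) = C(m,k+1) - C(m-t,k+1)`.
Telescoping with Pascal's rule gives `N(n,t,r,s) ≤ t·C(m-1,k)`, and superadditivity of
`C(·,k+1)` gives `2·C(m-p,k+1) ≤ C(m,k+1)` as soon as `m ≤ 2p`, i.e. `N(n,p,r,s) ≥ C(m,k+1)/2`.
Since `m·C(m-1,k) = (k+1)·C(m,k+1)`, these combine to `m·N(n,t,r,s) ≤ 2(k+1)·t·N(n,p,r,s)`,
so `γ₀ = α/(4(k+1))` and `γ₁ = 3/4` work once `n` is large enough that `n < 2m` and `C(m,k+1) > 0`.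
-/

/-- `N(n,t,r,s) = C(n−s+1, r−s+1) − C(n−s+1−t, r−s+1)`. -/
def NN (n t r s : ℕ) : ℕ :=
  (n - s + 1).choose (r - s + 1) - (n - s + 1 - t).choose (r - s + 1)

namespace Nat

theorem choose_succ_add_choose_succ_le (a b k : ℕ) :
    a.choose (k + 1) + b.choose (k + 1) ≤ (a + b).choose (k + 1) := by
  induction b with
  | zero => simp
  | succ b ih =>
    have hmono : b.choose k ≤ (a + b).choose k := choose_le_choose k le_add_self
    rw [choose_succ_succ', ← Nat.add_assoc a b 1, choose_succ_succ']
    omega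

theorem two_mul_choose_sub_le_choose (m p k : ℕ) (h : m ≤ 2 * p) :
    2 * (m - p).choose (k + 1) ≤ m.choose (k + 1) :=
  calc 2 * (m - p).choose (k + 1)
      ≤ (m - p + (m - p)).choose (k + 1) := by
        rw [two_mul]; exact choose_succ_add_choose_succ_le _ _ _
    _ ≤ m.choose (k + 1) := choose_le_choose _ (by omega)

theorem choose_succ_sub_choose_sub_le (M k t : ℕ) :
    (M + 1).choose (k + 1) - (M + 1 - t).choose (k + 1) ≤ t * M.choose k := by
  induction t with
  | zero => simp
  | succ t ih =>
    have hstep : (M + 1 - t).choose (k + 1) - (M + 1 - (t + 1)).choose (k + 1) ≤ M.choose k := by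
      rcases Nat.eq_zero_or_pos (M + 1 - t) with h | h
      · simp [h]
      · obtain ⟨j, hj⟩ : ∃ j, M + 1 - t = j + 1 := ⟨M + 1 - t - 1, by omega⟩
        rw [hj, show M + 1 - (t + 1) = j by omega, choose_succ_succ']
        have : j.choose k ≤ M.choose k := choose_le_choose k (by omega)
        omega
    rw [add_mul, one_mul]
    omega

end Nat

section NN

variable {n r s : ℕ}

theorem NN_le_mul_choose (t : ℕ) : NN n t r s ≤ t * (n - s).choose (r - s) :=
  Nat.choose_succ_sub_choose_sub_le _ _ _

theorem choose_le_two_mul_NN {p : ℕ} (hp : n - s + 1 ≤ 2 * p) :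
    (n - s + 1).choose (r - s + 1) ≤ 2 * NN n p r s := by
  have := Nat.two_mul_choose_sub_le_choose _ _ (r - s) hp
  unfold NN
  omega

theorem NN_pos {p : ℕ} (hrn : r ≤ n) (hp : n - s + 1 ≤ 2 * p) : 0 < NN n p r s := by
  have : 0 < (n - s + 1).choose (r - s + 1) := Nat.choose_pos (by omega)
  have := choose_le_two_mul_NN (r := r) hp
  omega

theorem mul_NN_le_mul_NN {t p : ℕ} (hp : n - s + 1 ≤ 2 * p) :
    (n - s + 1) * NN n t r s ≤ 2 * (r - s + 1) * t * NN n p r s :=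
  calc (n - s + 1) * NN n t r s
      ≤ (n - s + 1) * (t * (n - s).choose (r - s)) := Nat.mul_le_mul_left _ (NN_le_mul_choose t)
    _ = t * ((n - s + 1).choose (r - s + 1) * (r - s + 1)) := by
        rw [← Nat.add_one_mul_choose_eq]; ring
    _ ≤ t * (2 * NN n p r s * (r - s + 1)) := by gcongr; exact choose_le_two_mul_NN hp
    _ = 2 * (r - s + 1) * t * NN n p r s := by ring

end NN

theorem stmt12_general (α : ℝ) (hα0 : 0 < α) (hα1 : α < 1) (r s : ℕ) :
    ∃ γ₀ γ₁ : ℝ, ∃ n₂ : ℕ, 0 < γ₀ ∧ γ₀ < γ₁ ∧ γ₁ < 1 ∧ 0 < n₂ ∧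
      ∀ n t p : ℕ, n₂ ≤ n → (t : ℝ) ≤ γ₀ * n → γ₁ * n ≤ (p : ℝ) → p ≤ n →
        α * (NN n p r s : ℝ) > (NN n t r s : ℝ) := by
  set K : ℝ := ((r - s : ℕ) : ℝ) + 1 with hK_def
  have hK : 1 ≤ K := by simp [K]
  refine ⟨α / (4 * K), 3 / 4, r + 2 * s + 2, by positivity, ?_, by norm_num, by omega, ?_⟩
  · rw [div_lt_iff₀ (by positivity)]; nlinarith
  intro n t p hn ht hp _
  have hn' : (2 : ℝ) ≤ n := by norm_cast; omega
  have hm : n - s + 1 ≤ 2 * p := by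
    have : (n : ℝ) + 1 ≤ 2 * p := by linarith
    have : n + 1 ≤ 2 * p := by exact_mod_cast this
    omega
  have hNNp : (0 : ℝ) < NN n p r s := by exact_mod_cast NN_pos (by omega) hm
  have hkey : ((n - s + 1 : ℕ) : ℝ) * NN n t r s ≤ 2 * K * t * NN n p r s := by
    rw [hK_def]; exact_mod_cast mul_NN_le_mul_NN hm
  have hnm : (n : ℝ) < 2 * (n - s + 1 : ℕ) := by norm_cast; omega
  have hm0 : (0 : ℝ) < (n - s + 1 : ℕ) := by positivity
  refine lt_of_mul_lt_mul_left ?_ hm0.le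
  calc ((n - s + 1 : ℕ) : ℝ) * NN n t r s
      ≤ 2 * K * t * NN n p r s := hkey
    _ ≤ 2 * K * (α / (4 * K) * n) * NN n p r s := by gcongr
    _ = α * NN n p r s * n / 2 := by field_simp; ring
    _ < ((n - s + 1 : ℕ) : ℝ) * (α * NN n p r s) := by nlinarith [mul_pos hα0 hNNp]

theorem stmt12 (α : ℝ) (hα0 : 0 < α) (hα1 : α < 1) (r s : ℕ) (hs : 1 ≤ s) (hrs : s < r) :
    ∃ γ₀ γ₁ : ℝ, ∃ n₂ : ℕ, 0 < γ₀ ∧ γ₀ < γ₁ ∧ γ₁ < 1 ∧ 0 < n₂ ∧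
      ∀ n t p : ℕ, n₂ ≤ n → (t : ℝ) ≤ γ₀ * n → γ₁ * n ≤ (p : ℝ) → p ≤ n →
        α * (NN n p r s : ℝ) > (NN n t r s : ℝ) :=
  stmt12_general α hα0 hα1 r s
end

section
/- For any real α ∈ (0,1) and integers r > s ≥ 1, there exist constants σ ∈ (0,1) and n₃ > 0 such that for all integers n ≥ n₃ and 1 ≤ t ≤ σ·n, N(n, t, r, s) − α·C(n−s, r−s) < N(n−1, t, r, s), where N(n,t,r,s) = C(n−s+1, r−s+1) − C(n−s+1−t, r−s+1). -/
open Nat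

lemma NN_eq_NN_pred_add {n t s : ℕ} (r : ℕ) (hsn : s < n) (htn : t ≤ n - s) :
    (NN n t r s : ℝ) =
      NN (n - 1) t r s + (n - s).choose (r - s) - (n - s - t).choose (r - s) := by
  have e1 : n - s + 1 - t = n - s - t + 1 := by omega
  have e2 : n - 1 - s + 1 = n - s := by omega
  have e3 : n - s - t ≤ n - s := by omega
  unfold NN
  have h1 := choose_le_choose (r - s) e3
  have h2 := choose_le_choose (r - s + 1) e3
  rw [e1, e2, choose_succ_succ', choose_succ_succ', Nat.cast_sub (by omega), Nat.cast_sub h2]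
  push_cast
  ring

lemma one_sub_mul_choose_lt_choose_sub {α : ℝ} {m t k : ℕ} (hα : α ≤ 1) (hk : 0 < k)
    (h : k * ((t : ℝ) + k - 1) < α * m) :
    (1 - α) * m.choose k < (m - t).choose k := by
  have hk1 : (1 : ℝ) ≤ k := by exact_mod_cast hk
  set d : ℝ := t + k - 1 with hd
  have hd0 : 0 ≤ d := by linarith
  have hm : (0 : ℝ) < m := by nlinarith
  have hdm : d < m := by nlinarith
  have htkm : t + k ≤ m := by
    have : ((t + k : ℕ) : ℝ) < m + 1 := by push_cast; linarith
    exact Nat.lt_succ_iff.mp (by exact_mod_cast this)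
  have hu : ((m - t + 1 - k : ℕ) : ℝ) = m - d := by
    rw [Nat.cast_sub (by omega), Nat.cast_add, Nat.cast_sub (by omega)]
    push_cast
    ring
  have bernoulli : 1 - k * (d / m) ≤ (1 - d / m) ^ k := by
    have h2 : -2 ≤ -(d / m) := by
      have : d / m < 1 := (div_lt_one hm).mpr hdm
      linarith [div_nonneg hd0 hm.le]
    simpa [sub_eq_add_neg, mul_neg] using one_add_mul_le_pow h2 k
  have hpow : (1 - α) * (m : ℝ) ^ k < (m - d) ^ k := by
    have hkd : k * (d / m) < α := by rw [← mul_div_assoc, div_lt_iff₀ hm]; exact h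
    calc (1 - α) * (m : ℝ) ^ k < (1 - k * (d / m)) * m ^ k := by gcongr
      _ ≤ (1 - d / m) ^ k * m ^ k := by gcongr
      _ = (m - d) ^ k := by rw [← mul_pow, sub_mul, div_mul_cancel₀ _ hm.ne', one_mul]
  have hfac : (0 : ℝ) < k ! := by exact_mod_cast k.factorial_pos
  calc (1 - α) * (m.choose k : ℝ) ≤ (1 - α) * ((m : ℝ) ^ k / k !) := by
        gcongr
        exact_mod_cast Nat.choose_le_pow_div k m
    _ < (m - d) ^ k / k ! := by rw [← mul_div_assoc]; gcongr
    _ ≤ (m - t).choose k := by rw [← hu]; exact Nat.pow_le_choose k (m - t)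

theorem stmt13_general (α : ℝ) (hα0 : 0 < α) (hα1 : α < 1) (r s : ℕ) (hrs : s < r) :
    ∃ σ : ℝ, ∃ n₃ : ℕ, 0 < σ ∧ σ < 1 ∧ 0 < n₃ ∧
      ∀ n t : ℕ, n₃ ≤ n → 1 ≤ t → (t : ℝ) ≤ σ * n →
        (NN n t r s : ℝ) - α * ((n - s).choose (r - s) : ℝ) < (NN (n - 1) t r s : ℝ) := by
  set k := r - s
  have hk : (1 : ℝ) ≤ k := by exact_mod_cast (show 1 ≤ k by omega)
  refine ⟨α / (2 * k), ⌈2 * k ^ 2 / α⌉₊ + 2 * s + 1, by positivity,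
    (div_lt_one (by positivity)).mpr (by linarith), by omega, fun n t hn _ htσ => ?_⟩
  have hn' : 2 * k ^ 2 / α + 2 * s + 1 ≤ (n : ℝ) := by
    have := Nat.le_ceil (2 * (k : ℝ) ^ 2 / α)
    have : ((⌈2 * (k : ℝ) ^ 2 / α⌉₊ + 2 * s + 1 : ℕ) : ℝ) ≤ n := by exact_mod_cast hn
    push_cast at this
    linarith
  have hsn : s < n := by omega
  have hkt : k * (t : ℝ) ≤ α * n / 2 := by
    rw [div_mul_eq_mul_div, le_div_iff₀ (by positivity)] at htσ
    nlinarith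
  have hsmall : k * ((t : ℝ) + k - 1) < α * (n - s : ℕ) := by
    have : 2 * k ^ 2 + α * (2 * s + 1) ≤ α * n := by
      have := mul_le_mul_of_nonneg_left hn' hα0.le
      rw [mul_add, mul_add, mul_div_cancel₀ _ hα0.ne'] at this
      linarith
    rw [Nat.cast_sub hsn.le]
    nlinarith
  have hkey := one_sub_mul_choose_lt_choose_sub hα1.le (by omega) hsmall
  have htn : t ≤ n - s := by
    have : (t : ℝ) ≤ (n - s : ℕ) := by nlinarith
    exact_mod_cast this
  rw [NN_eq_NN_pred_add r hsn htn]
  linarith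

theorem stmt13 (α : ℝ) (hα0 : 0 < α) (hα1 : α < 1) (r s : ℕ) (hs : 1 ≤ s) (hrs : s < r) :
    ∃ σ : ℝ, ∃ n₃ : ℕ, 0 < σ ∧ σ < 1 ∧ 0 < n₃ ∧
      ∀ n t : ℕ, n₃ ≤ n → 1 ≤ t → (t : ℝ) ≤ σ * n →
        (NN n t r s : ℝ) - α * ((n - s).choose (r - s) : ℝ) < (NN (n - 1) t r s : ℝ) :=
  stmt13_general α hα0 hα1 r s hrs
end

section
/- For every integer r ≥ 2 and n ≥ r + 2, there exists an r-graph R on n vertices such that rk M_1^r(R) ≤ n − (n − r − 1) = r + 1 while C(n,r) − |R| < C(n, r) − C(r+1, r), i.e. the complement of R has fewer than N(n, n−r−1, r, 1) edges, where N(n,t,r,1) = C(n, r) − C(n−t, r). -/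
/-- Column vector building blocks for the rank factorization. -/
def gfun (r k m : ℕ) : ℚ :=
  if k = 0 then
    (if m < r+2 then 1 else 0) - (if m = 0 then 1 else 0) - (if m = 2 then 1 else 0)
  else if k = 1 then (if m = 0 then 1 else 0) - (if m = 1 then 1 else 0)
  else (if m = 2 then 1 else 0) - (if m = k+1 then 1 else 0)

/-- the vertex checked at row `k` of the factorization -/
def tf (k : ℕ) : ℕ := if k = 1 then 1 else k + 1

def pfun (r a b k : ℕ) : ℚ :=
  if k = 0 then 1 else if (tf k < r+2 ∧ tf k ≠ a ∧ tf k ≠ b) then 0 else 1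

set_option maxHeartbeats 1000000 in
lemma key_sum (r a b m : ℕ) (hr : 2 ≤ r) (ha : a < 2) (hb2 : 2 ≤ b) (hbr : b < r+2) :
    ∑ k ∈ Finset.range (r+1), pfun r a b k * gfun r k m
    = if (m < r+2 ∧ m ≠ a ∧ m ≠ b) then 1 else 0 := by
  have hsplit : Finset.range (r+1) = insert 0 (insert 1 (Finset.Ico 2 (r+1))) := by
    ext k; simp [Finset.mem_Ico]; omega
  rw [hsplit, Finset.sum_insert (by simp [Finset.mem_Ico]),
    Finset.sum_insert (by simp [Finset.mem_Ico])]
  have hico : ∀ k ∈ Finset.Ico 2 (r+1),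
      pfun r a b k * gfun r k m
      = if k = b - 1 then ((if m = 2 then (1:ℚ) else 0) - (if m = b then 1 else 0)) else 0 := by
    intro k hk
    simp only [Finset.mem_Ico] at hk
    have hk0 : k ≠ 0 := by omega
    have hk1 : k ≠ 1 := by omega
    have htf : tf k = k + 1 := if_neg hk1
    simp only [gfun, pfun, htf, if_neg hk0, if_neg hk1]
    by_cases hkb : k = b - 1
    · have hb : k + 1 = b := by omega
      rw [if_pos hkb, if_neg (by omega : ¬(k+1 < r+2 ∧ k+1 ≠ a ∧ k+1 ≠ b)), hb]
      ring
    · rw [if_neg hkb, if_pos ⟨by omega, by omega, by omega⟩]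
      ring
  rw [Finset.sum_congr rfl hico, Finset.sum_ite_eq' (Finset.Ico 2 (r+1)) (b-1)]
  simp only [gfun, pfun, tf, Finset.mem_Ico]
  split_ifs <;> (try norm_num) <;> (try assumption) <;> omega

/-- The edge `V \ {a, b}` where `V` is the set of the first `r+2` vertices. -/
def efun (r n a b : ℕ) : Finset (Fin n) :=
  Finset.univ.filter (fun x => x.val < r+2 ∧ x.val ≠ a ∧ x.val ≠ b)

lemma mem_efun {r n a b : ℕ} (x : Fin n) :
    x ∈ efun r n a b ↔ (x.val < r+2 ∧ x.val ≠ a ∧ x.val ≠ b) := by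
  simp [efun]

lemma mem_image_efun {r n a b : ℕ} (hn : r+2 ≤ n) (m : ℕ) :
    m ∈ (efun r n a b).image Fin.val ↔ (m < r+2 ∧ m ≠ a ∧ m ≠ b) := by
  simp only [Finset.mem_image]
  constructor
  · rintro ⟨x, hx, rfl⟩; exact (mem_efun x).1 hx
  · intro h; exact ⟨⟨m, by omega⟩, (mem_efun _).2 h, rfl⟩

lemma card_efun {r n a b : ℕ} (hn : r+2 ≤ n) (ha : a < 2) (hb2 : 2 ≤ b) (hbr : b < r+2) :
    (efun r n a b).card = r := by
  have h1 : (efun r n a b).card = ((efun r n a b).image Fin.val).card :=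
    (Finset.card_image_of_injective _ Fin.val_injective).symm
  have h2 : (efun r n a b).image Fin.val = Finset.range (r+2) \ {a, b} := by
    ext m
    rw [mem_image_efun hn]
    simp only [Finset.mem_sdiff, Finset.mem_range, Finset.mem_insert, Finset.mem_singleton]
    omega
  rw [h1, h2, Finset.card_sdiff_of_subset]
  · rw [Finset.card_range, Finset.card_insert_of_notMem (by simp; omega), Finset.card_singleton]
    omega
  · intro m hm
    simp only [Finset.mem_insert, Finset.mem_singleton] at hm
    simp only [Finset.mem_range]
    omega

/-- Our edge set: complements (inside the first `r+2` vertices) of the pairs `{a,b}`,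
`a ∈ {0,1}`, `2 ≤ b < r+2`. -/
def Rset (r n : ℕ) : Finset (Finset (Fin n)) :=
  (Finset.range 2 ×ˢ Finset.Ico 2 (r+2)).image (fun p => efun r n p.1 p.2)

lemma mem_Rset {r n : ℕ} {e : Finset (Fin n)} :
    e ∈ Rset r n ↔ ∃ a b, a < 2 ∧ 2 ≤ b ∧ b < r+2 ∧ e = efun r n a b := by
  simp only [Rset, Finset.mem_image, Finset.mem_product, Finset.mem_range, Finset.mem_Ico,
    Prod.exists]
  constructor
  · rintro ⟨a, b, ⟨ha, hb⟩, rfl⟩; exact ⟨a, b, ha, hb.1, hb.2, rfl⟩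
  · rintro ⟨a, b, ha, hb1, hb2, rfl⟩; exact ⟨a, b, ⟨ha, hb1, hb2⟩, rfl⟩

lemma efun_injOn {r n : ℕ} (hn : r+2 ≤ n) :
    Set.InjOn (fun p : ℕ × ℕ => efun r n p.1 p.2)
      ((Finset.range 2 ×ˢ Finset.Ico 2 (r+2)) : Finset (ℕ × ℕ)) := by
  rintro ⟨a, b⟩ hab ⟨c, d⟩ hcd h
  simp only [Finset.coe_product, Finset.coe_range, Finset.coe_Ico, Set.mem_prod,
    Set.mem_Iio, Set.mem_Ico] at hab hcd
  have key : ∀ m, m < r + 2 → ((m ≠ a ∧ m ≠ b) ↔ (m ≠ c ∧ m ≠ d)) := by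
    intro m hm
    have h' : (⟨m, by omega⟩ : Fin n) ∈ efun r n a b ↔ (⟨m, by omega⟩ : Fin n) ∈ efun r n c d := by
      simp only at h
      rw [h]
    rw [mem_efun, mem_efun] at h'
    simp only at h'
    constructor
    · intro hh; exact (h'.1 ⟨hm, hh⟩).2
    · intro hh; exact (h'.2 ⟨hm, hh⟩).2
  have e1 := key a (by omega)
  have e2 := key b (by omega)
  have e3 := key c (by omega)
  have e4 := key d (by omega)
  have : a = c ∧ b = d := by
    constructor <;> omega
  simp [Prod.ext_iff, this.1, this.2]

lemma card_Rset {r n : ℕ} (hr : 2 ≤ r) (hn : r+2 ≤ n) : (Rset r n).card = 2 * r := by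
  rw [Rset, Finset.card_image_of_injOn (efun_injOn hn), Finset.card_product,
    Finset.card_range, Nat.card_Ico]
  omega

/-- left factor -/
def Pmat (r n : ℕ) : Matrix {e : Finset (Fin n) // e ∈ Rset r n} (Fin (r+1)) ℚ :=
  fun e k => if (k : ℕ) = 0 then 1 else
    if (tf (k : ℕ)) ∈ (e : Finset (Fin n)).image Fin.val then 0 else 1

/-- right factor -/
def Qmat (r n : ℕ) : Matrix (Fin (r+1)) {S : Finset (Fin n) // S.card = 1} ℚ :=
  fun k S => ∑ x ∈ (S : Finset (Fin n)), gfun r (k : ℕ) x.val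

lemma incl_factorization {r n : ℕ} (hr : 2 ≤ r) (hn : r+2 ≤ n) :
    inclusionMatrix n 1 (Rset r n) = Pmat r n * Qmat r n := by
  ext eh Sh
  obtain ⟨e, he⟩ := eh
  obtain ⟨S, hS⟩ := Sh
  obtain ⟨x, rfl⟩ := Finset.card_eq_one.mp hS
  obtain ⟨a, b, ha, hb2, hbr, rfl⟩ := mem_Rset.mp he
  rw [Matrix.mul_apply]
  simp only [inclusionMatrix, Pmat, Qmat, Finset.sum_singleton]
  simp only [Finset.singleton_subset_iff]
  have hcoef : ∀ k : Fin (r+1),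
      (if (k : ℕ) = 0 then (1:ℚ) else
        if (tf (k : ℕ)) ∈ (efun r n a b).image Fin.val then 0 else 1) * gfun r (k : ℕ) x.val
      = pfun r a b (k : ℕ) * gfun r (k : ℕ) x.val := by
    intro k
    congr 1
    simp only [pfun]
    by_cases hk0 : (k : ℕ) = 0
    · simp [hk0]
    · rw [if_neg hk0, if_neg hk0]
      simp only [mem_image_efun hn]
  rw [Finset.sum_congr rfl (fun k _ => hcoef k)]
  rw [Fin.sum_univ_eq_sum_range (fun k => pfun r a b k * gfun r k x.val) (r+1)]
  rw [key_sum r a b x.val hr ha hb2 hbr]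
  simp only [mem_efun]

theorem stmt16 (r n : ℕ) (hr : 2 ≤ r) (hn : r + 2 ≤ n) :
    ∃ R : Finset (Finset (Fin n)),
      R ⊆ (Finset.univ : Finset (Fin n)).powersetCard r ∧
      (inclusionMatrix n 1 R).rank ≤ r + 1 ∧
      n.choose r - R.card < n.choose r - (r + 1).choose r := by
  refine ⟨Rset r n, ?_, ?_, ?_⟩
  · intro e he
    obtain ⟨a, b, ha, hb2, hbr, rfl⟩ := mem_Rset.mp he
    rw [Finset.mem_powersetCard]
    exact ⟨Finset.subset_univ _, card_efun hn ha hb2 hbr⟩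
  · rw [incl_factorization hr hn]
    refine le_trans (Matrix.rank_mul_le_right _ _) ?_
    simpa using Matrix.rank_le_card_height (Qmat r n)
  · have hcard : (Rset r n).card = 2 * r := card_Rset hr hn
    have hsub : (Rset r n).card ≤ n.choose r := by
      have h1 : Rset r n ⊆ (Finset.univ : Finset (Fin n)).powersetCard r := by
        intro e he
        obtain ⟨a, b, ha, hb2, hbr, rfl⟩ := mem_Rset.mp he
        rw [Finset.mem_powersetCard]
        exact ⟨Finset.subset_univ _, card_efun hn ha hb2 hbr⟩
      calc (Rset r n).card ≤ ((Finset.univ : Finset (Fin n)).powersetCard r).card :=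
            Finset.card_le_card h1
        _ = n.choose r := by
            rw [Finset.card_powersetCard, Finset.card_univ, Fintype.card_fin]
    have hch : r + 1 < n.choose r := by
      have h1 : (r+2).choose r ≤ n.choose r := Nat.choose_le_choose r hn
      have h2 : (r+2).choose 2 = (r+2).choose r := by
        have := Nat.choose_symm (by omega : r ≤ r + 2)
        simpa [show r + 2 - r = 2 by omega] using this
      have h3 : (r+2).choose 2 * 2 = (r+2) * (r+1) := by
        have h := Nat.choose_succ_right_eq (r+2) 1
        simpa [Nat.choose_one_right, show r + 2 - 1 = r + 1 by omega] using h
      have h4 : 2*(r+1) < (r+2)*(r+1) :=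
        (Nat.mul_lt_mul_right (show 0 < r+1 by omega)).mpr (by omega)
      omega
    rw [Nat.choose_succ_self_right]
    omega
end
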